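/- If φ(n) is a non-decreasing sequence of positive reals such that the set E_{φ(n),α} = {x in (0,1)\Q : lim_{n→∞} s_n(x)/φ(n) = α} has Hausdorff dimension 1 for some α > 0, then limsup_{n→∞} φ(n)/n = ∞. -/

import Mathlib

open Filter MeasureTheory Set

/-- The Gauss map. -/
noncomputable def gaussMap (x : ℝ) : ℝ := Int.fract x⁻¹

/-- The `n`-th continued fraction partial quotient of `x` (1-indexed). -/
noncomputable def cfA (x : ℝ) (n : ℕ) : ℕ := ⌊(gaussMap^[n - 1] x)⁻¹⌋₊

/-- `s_n(x)`, the sum of the first `n` partial quotients. -/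
noncomputable def cfS (x : ℝ) (n : ℕ) : ℕ := ∑ j ∈ Finset.Icc 1 n, cfA x j

/-- The level set `E_{φ(n),α} = {x : lim s_n(x)/φ(n) = α}` (irrationals in `(0,1)`). -/
noncomputable def levelSet (φ : ℕ → ℝ) (α : ℝ) : Set ℝ :=
  {x : ℝ | x ∈ Set.Ioo (0 : ℝ) 1 ∧ Irrational x ∧
    Tendsto (fun n => (cfS x n : ℝ) / φ n) atTop (nhds α)}

/-- `F_A = {x : s_n(x)/n ≤ A for all n ≥ 1}` (irrationals in `(0,1)`). -/
noncomputable def slowSet (A : ℝ) : Set ℝ :=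
  {x : ℝ | x ∈ Set.Ioo (0 : ℝ) 1 ∧ Irrational x ∧
    ∀ n, 1 ≤ n → (cfS x n : ℝ) / n ≤ A}

/-!
If `limsup φ(n)/n < ∞`, then `φ(n) ≤ B n` eventually, so every `x ∈ E_{φ,α}` satisfies
`s_n(x) ≤ C n + M` for all `n`, with `C` independent of `x` and `M` depending on `x`.
Prepending `M` partial quotients equal to `1` maps such an `x` into `F_C` (once `C ≥ 2`), and the
map `y ↦ 1/(1+y)` that prepends one `1` has the Gauss map, Lipschitz on `(1/2, 1)`, as a left
inverse, so it does not lower Hausdorff dimension. Countable stability of `dimH` then gives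
`dimH E_{φ,α} ≤ dimH F_C < 1`.
-/

theorem cfS_zero (x : ℝ) : cfS x 0 = 0 := by
  simp [cfS]

theorem cfS_succ (x : ℝ) (n : ℕ) : cfS x (n + 1) = cfS x n + cfA x (n + 1) :=
  Finset.sum_Icc_succ_top (Nat.le_add_left 1 n) _

theorem cfS_mono (x : ℝ) : Monotone (cfS x) := fun _ _ h =>
  Finset.sum_le_sum_of_subset (Finset.Icc_subset_Icc_right h)

theorem gaussMap_eq_inv_sub_one {x : ℝ} (hx : x ∈ Ioo (2⁻¹ : ℝ) 1) : gaussMap x = x⁻¹ - 1 := by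
  have hx₀ : 0 < x := lt_trans (by norm_num) hx.1
  have h₁ : 1 < x⁻¹ := (one_lt_inv₀ hx₀).mpr hx.2
  have h₂ : x⁻¹ < 2 := by simpa using inv_strictAnti₀ (by norm_num) hx.1
  have : ⌊x⁻¹⌋ = 1 := by
    rw [Int.floor_eq_iff]
    constructor <;> push_cast <;> linarith
  rw [gaussMap, Int.fract, this, Int.cast_one]

theorem lipschitzOnWith_gaussMap : LipschitzOnWith 4 gaussMap (Ioo (2⁻¹ : ℝ) 1) := by
  refine LipschitzOnWith.of_dist_le_mul fun x hx z hz => ?_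
  have hx₀ : 0 < x := lt_trans (by norm_num) hx.1
  have hz₀ : 0 < z := lt_trans (by norm_num) hz.1
  have hxz : 4⁻¹ ≤ ‖x‖ * ‖z‖ := by
    rw [Real.norm_of_nonneg hx₀.le, Real.norm_of_nonneg hz₀.le]
    nlinarith [hx.1, hz.1]
  rw [gaussMap_eq_inv_sub_one hx, gaussMap_eq_inv_sub_one hz, dist_sub_right,
    dist_inv_inv₀ hx₀.ne' hz₀.ne', div_le_iff₀ (by positivity), NNReal.coe_ofNat]
  nlinarith [dist_nonneg (x := x) (y := z)]

/-- `[0; a₁, a₂, …] ↦ [0; 1, a₁, a₂, …]`. -/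
noncomputable def prependOne (y : ℝ) : ℝ := (1 + y)⁻¹

theorem mapsTo_prependOne : MapsTo prependOne (Ioo (0 : ℝ) 1) (Ioo 2⁻¹ 1) := by
  intro y hy
  have h₁ : 0 < 1 + y := by linarith [hy.1]
  refine ⟨?_, ?_⟩
  · rw [prependOne, inv_lt_inv₀ (by norm_num) h₁]
    linarith [hy.2]
  · exact inv_lt_one_of_one_lt₀ (by linarith [hy.1])

theorem mapsTo_prependOne_iterate (K : ℕ) : MapsTo prependOne^[K] (Ioo (0 : ℝ) 1) (Ioo 0 1) :=
  (mapsTo_prependOne.mono_right (Ioo_subset_Ioo_left (by norm_num))).iterate K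

theorem mapsTo_prependOne_irrational :
    MapsTo prependOne {y : ℝ | Irrational y} {y | Irrational y} :=
  fun _ hy => by simpa [prependOne] using (hy.intCast_add 1).inv

theorem gaussMap_prependOne {y : ℝ} (hy : y ∈ Ico (0 : ℝ) 1) : gaussMap (prependOne y) = y := by
  rw [gaussMap, prependOne, inv_inv, add_comm, Int.fract_add_one, Int.fract_eq_self]
  exact hy

theorem cfA_prependOne_one {y : ℝ} (hy : y ∈ Ico (0 : ℝ) 1) : cfA (prependOne y) 1 = 1 := by
  rw [cfA, Nat.sub_self, Function.iterate_zero_apply, prependOne, inv_inv,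
    Nat.floor_eq_iff (by linarith [hy.1])]
  constructor <;> push_cast <;> linarith [hy.1, hy.2]

theorem cfA_prependOne_succ {y : ℝ} (hy : y ∈ Ico (0 : ℝ) 1) (n : ℕ) :
    cfA (prependOne y) (n + 1 + 1) = cfA y (n + 1) := by
  simp only [cfA, Nat.add_sub_cancel, Function.iterate_succ_apply, gaussMap_prependOne hy]

theorem cfS_prependOne {y : ℝ} (hy : y ∈ Ico (0 : ℝ) 1) (n : ℕ) :
    cfS (prependOne y) (n + 1) = 1 + cfS y n := by
  induction n with
  | zero => rw [cfS_succ, cfS_zero, cfS_zero, cfA_prependOne_one hy]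
  | succ n ih => rw [cfS_succ, ih, cfA_prependOne_succ hy, cfS_succ, add_assoc]

theorem cfS_prependOne_iterate {x : ℝ} (hx : x ∈ Ioo (0 : ℝ) 1) (K n : ℕ) :
    cfS (prependOne^[K] x) n = min n K + cfS x (n - K) := by
  induction K generalizing n with
  | zero => simp
  | succ K ih =>
    have hK : prependOne^[K] x ∈ Ico (0 : ℝ) 1 :=
      Ioo_subset_Ico_self (mapsTo_prependOne_iterate K hx)
    cases n with
    | zero => simp [cfS_zero]
    | succ m =>
      rw [Function.iterate_succ_apply', cfS_prependOne hK, ih, Nat.succ_sub_succ,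
        Nat.succ_min_succ]
      omega

theorem leftInvOn_gaussMap_prependOne : LeftInvOn gaussMap prependOne (Ico 0 1) :=
  fun _ hy => gaussMap_prependOne hy

theorem dimH_le_dimH_image_prependOne {S : Set ℝ} (hS : S ⊆ Ioo 0 1) :
    dimH S ≤ dimH (prependOne '' S) :=
  calc dimH S = dimH (gaussMap '' (prependOne '' S)) := by
        rw [(leftInvOn_gaussMap_prependOne.mono (hS.trans Ioo_subset_Ico_self)).image_image]
  _ ≤ dimH (prependOne '' S) :=
        (lipschitzOnWith_gaussMap.mono (mapsTo_prependOne.mono_left hS).image_subset).dimH_image_le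

theorem dimH_le_dimH_image_prependOne_iterate {S : Set ℝ} (hS : S ⊆ Ioo 0 1) (K : ℕ) :
    dimH S ≤ dimH (prependOne^[K] '' S) := by
  induction K with
  | zero => simp
  | succ K ih =>
    rw [Function.iterate_succ', image_comp]
    exact ih.trans
      (dimH_le_dimH_image_prependOne ((mapsTo_prependOne_iterate K).mono_left hS).image_subset)

def sumBoundedSet (C : ℝ) (M : ℕ) : Set ℝ :=
  {x : ℝ | x ∈ Ioo (0 : ℝ) 1 ∧ Irrational x ∧ ∀ n, (cfS x n : ℝ) ≤ C * n + M}

theorem mapsTo_prependOne_iterate_slowSet {C : ℝ} (hC : 2 ≤ C) (M : ℕ) :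
    MapsTo prependOne^[M] (sumBoundedSet C M) (slowSet C) := by
  rintro x ⟨hx, hirr, hbd⟩
  refine ⟨mapsTo_prependOne_iterate M hx, mapsTo_prependOne_irrational.iterate M hirr,
    fun n hn => ?_⟩
  rw [div_le_iff₀ (by exact_mod_cast hn), cfS_prependOne_iterate hx]
  rcases le_total n M with h | h
  · rw [min_eq_left h, Nat.sub_eq_zero_of_le h, cfS_zero]
    push_cast
    nlinarith [(n.cast_nonneg : (0 : ℝ) ≤ n)]
  · have := hbd (n - M)
    rw [min_eq_right h]
    push_cast [Nat.cast_sub h] at this ⊢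
    nlinarith [mul_le_mul_of_nonneg_right hC (M.cast_nonneg : (0 : ℝ) ≤ M)]

theorem dimH_sumBoundedSet_le {C : ℝ} (hC : 2 ≤ C) (M : ℕ) :
    dimH (sumBoundedSet C M) ≤ dimH (slowSet C) :=
  (dimH_le_dimH_image_prependOne_iterate (fun _ hx => hx.1) M).trans
    (dimH_mono (mapsTo_prependOne_iterate_slowSet hC M).image_subset)

theorem exists_le_mul_add_of_eventually_le {u : ℕ → ℕ} (hu : Monotone u) {C : ℝ} (hC : 0 ≤ C)
    (h : ∀ᶠ n in atTop, (u n : ℝ) ≤ C * n) : ∃ M : ℕ, ∀ n, (u n : ℝ) ≤ C * n + M := by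
  obtain ⟨N, hN⟩ := eventually_atTop.mp h
  refine ⟨u N, fun n => ?_⟩
  rcases le_total N n with h | h
  · linarith [hN n h, (u N).cast_nonneg (α := ℝ)]
  · have : (u n : ℝ) ≤ u N := by exact_mod_cast hu h
    linarith [mul_nonneg hC n.cast_nonneg]

theorem eventually_cfS_le_of_mem_levelSet {φ : ℕ → ℝ} (hpos : ∀ n, 0 < φ n) {α B x : ℝ}
    (hB : ∀ᶠ n in atTop, φ n ≤ B * n) (hx : x ∈ levelSet φ α) :
    ∀ᶠ n in atTop, (cfS x n : ℝ) ≤ (α + 1) * B * n := by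
  filter_upwards [hx.2.2.eventually_lt_const (lt_add_one α), hB] with n hlt hle
  rw [div_lt_iff₀ (hpos n)] at hlt
  have hα : 0 < α + 1 :=
    (mul_pos_iff_of_pos_right (hpos n)).mp ((cfS x n).cast_nonneg.trans_lt hlt)
  nlinarith [mul_le_mul_of_nonneg_left hle hα.le]

theorem levelSet_subset_iUnion_sumBoundedSet {φ : ℕ → ℝ} (hpos : ∀ n, 0 < φ n) {α B : ℝ}
    (hB : ∀ᶠ n in atTop, φ n ≤ B * n) :
    levelSet φ α ⊆ ⋃ M : ℕ, sumBoundedSet (max ((α + 1) * B) 2) M := by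
  intro x hx
  have hC : (0 : ℝ) ≤ max ((α + 1) * B) 2 := zero_le_two.trans (le_max_right _ _)
  have hle : ∀ᶠ n in atTop, (cfS x n : ℝ) ≤ max ((α + 1) * B) 2 * n :=
    (eventually_cfS_le_of_mem_levelSet hpos hB hx).mono fun n h =>
      h.trans (mul_le_mul_of_nonneg_right (le_max_left _ _) n.cast_nonneg)
  obtain ⟨M, hM⟩ := exists_le_mul_add_of_eventually_le (cfS_mono x) hC hle
  exact mem_iUnion.mpr ⟨M, hx.1, hx.2.1, hM⟩

theorem exists_eventually_le_mul_of_limsup_ne_top {u : ℕ → ℝ}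
    (h : limsup (fun n => ((u n / n : ℝ) : EReal)) atTop ≠ ⊤) :
    ∃ B : ℝ, ∀ᶠ n in atTop, u n ≤ B * n := by
  obtain ⟨B, hB, -⟩ := EReal.lt_iff_exists_real_btwn.mp (lt_top_iff_ne_top.mpr h)
  refine ⟨B, ?_⟩
  filter_upwards [eventually_lt_of_limsup_lt hB, eventually_gt_atTop 0] with n hn hn₀
  rw [EReal.coe_lt_coe_iff, div_lt_iff₀ (by exact_mod_cast hn₀)] at hn
  exact hn.le

theorem stmt_6_general (φ : ℕ → ℝ) (hpos : ∀ n, 0 < φ n)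
    (α : ℝ)
    (hCV : ∀ A : ℝ, dimH (slowSet A) < 1)
    (hdim : dimH (levelSet φ α) = 1) :
    Filter.limsup (fun n => ((φ n / n : ℝ) : EReal)) atTop = (⊤ : EReal) := by
  by_contra hφ
  obtain ⟨B, hB⟩ := exists_eventually_le_mul_of_limsup_ne_top hφ
  set C := max ((α + 1) * B) 2
  have hle : dimH (levelSet φ α) ≤ dimH (slowSet C) :=
    calc dimH (levelSet φ α) ≤ dimH (⋃ M : ℕ, sumBoundedSet C M) :=
          dimH_mono (levelSet_subset_iUnion_sumBoundedSet hpos hB)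
    _ = ⨆ M : ℕ, dimH (sumBoundedSet C M) := dimH_iUnion _
    _ ≤ dimH (slowSet C) := iSup_le fun M => dimH_sumBoundedSet_le (le_max_right _ _) M
  exact (hdim ▸ hle).not_gt (hCV C)

theorem stmt_6 (φ : ℕ → ℝ) (hpos : ∀ n, 0 < φ n) (hmono : Monotone φ)
    (α : ℝ) (hα : 0 < α)
    (hCV : ∀ A : ℝ, dimH (slowSet A) < 1)
    (hdim : dimH (levelSet φ α) = 1) :
    Filter.limsup (fun n => ((φ n / n : ℝ) : EReal)) atTop = (⊤ : EReal) :=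
  stmt_6_general φ hpos α hCV hdim
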